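/- arXiv:2307.08267 — 4 statements merged into one kernel-verified Lean document; each statement's English description precedes it below -/
import Mathlib

section
/- Let A be a unital C*-algebra. If the isometry semigroup I(A) admits a left-invariant mean on the space of norm-uniformly continuous bounded functions on I(A), then A admits a tracial state. More precisely, if A ⊂ B(H) is the universal representation, m' is such a left-invariant mean, and ξ ∈ H is any unit vector, then x ↦ m'(s ↦ ⟨s*xsξ, ξ⟩) defines an A-central state on B(H), whose restriction to A is a tracial state. -/
/-!
Common definitions for formalizing the paper
"Amenability properties of unitary groups of C*-algebras".
-/

open scoped ComplexOrder TensorProduct Kronecker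
open Filter

noncomputable section

namespace Paper

universe u v

/-! ### States and traces -/

/-- A state on a complex star algebra: a positive unital linear functional. -/
structure IsState {A : Type*} [Ring A] [StarRing A] [Module ℂ A] (φ : A → ℂ) : Prop where
  isLinear : IsLinearMap ℂ φ
  pos : ∀ a : A, 0 ≤ φ (star a * a)
  unital : φ 1 = 1

/-- A tracial state on a complex star algebra. -/
structure IsTracialState {A : Type*} [Ring A] [StarRing A] [Module ℂ A] (φ : A → ℂ)
    extends IsState φ : Prop where
  tracial : ∀ a b : A, φ (a * b) = φ (b * a)

/-- A positive linear functional (an element of `A^*_+`). -/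
def IsPositiveFunctional {A : Type*} [Ring A] [StarRing A] [Module ℂ A] (φ : A → ℂ) : Prop :=
  IsLinearMap ℂ φ ∧ ∀ a : A, 0 ≤ φ (star a * a)

/-- A tracial state "on" a subset `M` of a star algebra `B` (all axioms are only imposed on
members of `M`).  Used for states of C*-subalgebras and von Neumann subalgebras. -/
structure IsTracialStateOn {B : Type*} [Ring B] [StarRing B] [Module ℂ B] (M : Set B)
    (τ : B → ℂ) : Prop where
  map_add : ∀ x ∈ M, ∀ y ∈ M, τ (x + y) = τ x + τ y
  map_smul : ∀ (c : ℂ), ∀ x ∈ M, τ (c • x) = c * τ x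
  pos : ∀ x ∈ M, 0 ≤ τ (star x * x)
  unital : τ 1 = 1
  tracial : ∀ x ∈ M, ∀ y ∈ M, τ (x * y) = τ (y * x)

/-! ### C*-norms on algebraic tensor products, nuclearity, exactness -/

/-- The canonical star operation on the algebraic tensor product of two complex star
algebras, determined by `star (a ⊗ b) = star a ⊗ star b`. -/
instance tensorStar {A B : Type*} [Ring A] [Ring B] [StarRing A] [StarRing B]
    [Algebra ℂ A] [Algebra ℂ B] [StarModule ℂ A] [StarModule ℂ B] :
    Star (A ⊗[ℂ] B) where
  star := TensorProduct.liftAddHom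
    { toFun := fun a =>
        { toFun := fun b => star a ⊗ₜ[ℂ] star b
          map_zero' := by simp
          map_add' := fun b c => by simp [star_add, TensorProduct.tmul_add] }
      map_zero' := by ext b; simp
      map_add' := fun a c => by ext b; simp [star_add, TensorProduct.add_tmul] }
    (fun z a b => by
      show star (z • a) ⊗ₜ[ℂ] star b = star a ⊗ₜ[ℂ] star (z • b)
      rw [star_smul, star_smul, TensorProduct.smul_tmul])

/-- A C*-norm on a complex star algebra: a (ring) norm which is submultiplicative and
satisfies the C*-identity. -/
structure IsCStarNorm {B : Type*} [Ring B] [Algebra ℂ B] [Star B] (N : B → ℝ) : Prop where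
  eq_zero_iff : ∀ b, N b = 0 ↔ b = 0
  add_le : ∀ b c, N (b + c) ≤ N b + N c
  smul_eq : ∀ (z : ℂ) (b), N (z • b) = ‖z‖ * N b
  mul_le : ∀ b c, N (b * c) ≤ N b * N c
  cstar : ∀ b, N (star b * b) = N b * N b

/-- A C*-algebra `A` is nuclear if for every C*-algebra `B` there is a unique C*-norm on the
algebraic tensor product `A ⊗ B`. -/
def IsNuclear (A : Type u) [CStarAlgebra A] : Prop :=
  ∀ (B : Type u) [CStarAlgebra B],
    ∃ N : A ⊗[ℂ] B → ℝ, IsCStarNorm N ∧ ∀ N' : A ⊗[ℂ] B → ℝ, IsCStarNorm N' → N' = N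

/-- A C*-algebra `A` is exact if the minimal tensor product with `A` preserves short exact
sequences `0 → ker π → B → C → 0`.  This is expressed at the level of the algebraic tensor
products: for every surjective *-homomorphism `π : B → C` the minimal C*-norm of the image of
`t` under `π ⊗ id` in `C ⊗ A` coincides with the quotient norm coming from the minimal
C*-norm on `B ⊗ A` modulo `(ker π) ⊗ A`. -/
def IsExact (A : Type u) [CStarAlgebra A] : Prop :=
  ∀ (B C : Type u) [CStarAlgebra B] [CStarAlgebra C] (π : B →⋆ₐ[ℂ] C),
    Function.Surjective π →
    ∀ (nB : B ⊗[ℂ] A → ℝ) (nC : C ⊗[ℂ] A → ℝ),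
      IsCStarNorm nB → IsCStarNorm nC →
      (∀ n : B ⊗[ℂ] A → ℝ, IsCStarNorm n → ∀ t, nB t ≤ n t) →
      (∀ n : C ⊗[ℂ] A → ℝ, IsCStarNorm n → ∀ t, nC t ≤ n t) →
      ∀ t : B ⊗[ℂ] A,
        nC (Algebra.TensorProduct.map π.toAlgHom (AlgHom.id ℂ A) t) =
          sInf {r : ℝ | ∃ s ∈ Submodule.span ℂ
            {x : B ⊗[ℂ] A | ∃ (k : B) (a : A), π k = 0 ∧ x = k ⊗ₜ[ℂ] a}, r = nB (t + s)}

/-- The QTS property: every nonzero quotient of `A` admits a tracial state.  (Quotients are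
represented by surjective *-homomorphisms onto nonzero C*-algebras.) -/
def HasQTS (A : Type u) [CStarAlgebra A] : Prop :=
  ∀ (B : Type u) [CStarAlgebra B], Nontrivial B →
    ∀ π : A →⋆ₐ[ℂ] B, Function.Surjective π → ∃ τ : B → ℂ, IsTracialState τ

/-- Simplicity: no nontrivial closed two-sided ideals. -/
def IsSimpleCStar (A : Type u) [CStarAlgebra A] : Prop :=
  ∀ I : Submodule ℂ A, IsClosed (I : Set A) →
    (∀ x ∈ I, ∀ a : A, a * x ∈ I ∧ x * a ∈ I) → I = ⊥ ∨ I = ⊤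

end Paper

end

/-! ### The isometry semigroup, means, and amenability -/

namespace Paper

universe u

/-- The isometry semigroup (in fact monoid) `I(A)` of a unital C*-algebra. -/
def Isom (A : Type*) [CStarAlgebra A] : Submonoid A where
  carrier := {s | star s * s = 1}
  one_mem' := by simp
  mul_mem' := by
    intro a b ha hb
    have ha' : star a * a = 1 := ha
    have hb' : star b * b = 1 := hb
    show star (a * b) * (a * b) = 1
    rw [star_mul, mul_assoc, ← mul_assoc (star a), ha', one_mul, hb']

/-- Uniformly continuous bounded complex-valued functions on a uniform space. -/
def IsUCB {X : Type*} [UniformSpace X] (f : X → ℂ) : Prop :=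
  UniformContinuous f ∧ ∃ M : ℝ, ∀ x, ‖f x‖ ≤ M

/-- A mean on the class `P` of (test) functions on `X`: a positive unital linear functional. -/
structure IsMeanOn {X : Type*} (P : (X → ℂ) → Prop) (m : (X → ℂ) → ℂ) : Prop where
  map_add : ∀ f g, P f → P g → m (f + g) = m f + m g
  map_smul : ∀ (c : ℂ) (f), P f → m (c • f) = c * m f
  nonneg : ∀ f, P f → (∀ x, 0 ≤ f x) → 0 ≤ m f
  unit : m (fun _ => 1) = 1

/-- Right amenability of the isometry semigroup `I(A)` in the norm topology: a right-invariant
mean on the norm-uniformly continuous bounded functions on `I(A)`. -/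
def RightAmenableIsom (A : Type u) [CStarAlgebra A] : Prop :=
  ∃ m : ((Isom A) → ℂ) → ℂ, IsMeanOn IsUCB m ∧
    ∀ f : (Isom A) → ℂ, IsUCB f → ∀ s : Isom A, m (fun t => f (t * s)) = m f

/-- Left amenability of the isometry semigroup `I(A)` in the norm topology. -/
def LeftAmenableIsom (A : Type u) [CStarAlgebra A] : Prop :=
  ∃ m : ((Isom A) → ℂ) → ℂ, IsMeanOn IsUCB m ∧
    ∀ f : (Isom A) → ℂ, IsUCB f → ∀ s : Isom A, m (fun t => f (s * t)) = m f

/-! ### Topologies on the unitary group and amenability notions -/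

variable (A : Type u) [CStarAlgebra A]

/-- Right uniformly continuous bounded functions on `U(A)` for the weak topology
`σ(A, A*)`: basic neighbourhoods of `1` are given by finitely many continuous linear
functionals. -/
def WeakRUCB (f : unitary A → ℂ) : Prop :=
  (∃ M : ℝ, ∀ u, ‖f u‖ ≤ M) ∧
  ∀ ε : ℝ, 0 < ε → ∃ (Φ : Finset (A →L[ℂ] ℂ)) (δ : ℝ), 0 < δ ∧
    ∀ u v : unitary A, (∀ φ ∈ Φ, ‖φ ((↑(u * v⁻¹) : A) - 1)‖ < δ) → ‖f u - f v‖ < ε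

/-- Amenability of `U(A)` in the weak topology. -/
def AmenableWeak : Prop :=
  ∃ m : (unitary A → ℂ) → ℂ, IsMeanOn (WeakRUCB A) m ∧
    ∀ f, WeakRUCB A f → ∀ s : unitary A, m (fun t => f (s * t)) = m f

/-- Skew-amenability of `U(A)` in the weak topology. -/
def SkewAmenableWeak : Prop :=
  ∃ m : (unitary A → ℂ) → ℂ, IsMeanOn (WeakRUCB A) m ∧
    ∀ f, WeakRUCB A f → ∀ s : unitary A, m (fun t => f (t * s)) = m f

/-- The uniform 2-norm `‖a‖_{T(A)} = sup {τ(a* a)^{1/2} : τ ∈ T(A)}`. -/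
noncomputable def uniformTwoNorm (a : A) : ℝ :=
  sSup {r : ℝ | ∃ τ : A → ℂ, IsTracialState τ ∧ r = Real.sqrt (τ (star a * a)).re}

/-- Right uniformly continuous bounded functions on `U(A)` for the uniform 2-norm topology. -/
def TwoNormRUCB (f : unitary A → ℂ) : Prop :=
  (∃ M : ℝ, ∀ u, ‖f u‖ ≤ M) ∧
  ∀ ε : ℝ, 0 < ε → ∃ δ : ℝ, 0 < δ ∧
    ∀ u v : unitary A, uniformTwoNorm A ((↑(u * v⁻¹) : A) - 1) < δ → ‖f u - f v‖ < ε

/-- Amenability of `U(A)` in the uniform 2-norm topology. -/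
def TwoNormAmenable : Prop :=
  ∃ m : (unitary A → ℂ) → ℂ, IsMeanOn (TwoNormRUCB A) m ∧
    ∀ f, TwoNormRUCB A f → ∀ s : unitary A, m (fun t => f (s * t)) = m f

/-- The seminorm `‖a‖_φ = φ(a a*)^{1/2}` defining the skew-strong topology. -/
noncomputable def skewSeminorm (φ : A → ℂ) (a : A) : ℝ :=
  Real.sqrt (φ (a * star a)).re

/-- Right uniformly continuous bounded functions on `U(A)` for the skew-strong topology,
given by the seminorms `a ↦ φ(a a*)^{1/2}`, `φ ∈ A*_+`. -/
def SkewStrongRUCB (f : unitary A → ℂ) : Prop :=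
  (∃ M : ℝ, ∀ u, ‖f u‖ ≤ M) ∧
  ∀ ε : ℝ, 0 < ε → ∃ (Φ : Finset (A → ℂ)) (δ : ℝ),
    (∀ φ ∈ Φ, IsPositiveFunctional φ) ∧ 0 < δ ∧
    ∀ u v : unitary A,
      (∀ φ ∈ Φ, skewSeminorm A φ ((↑(u * v⁻¹) : A) - 1) < δ) → ‖f u - f v‖ < ε

/-- Skew-amenability of `U(A)` in the skew-strong topology. -/
def SkewAmenableSkewStrong : Prop :=
  ∃ m : (unitary A → ℂ) → ℂ, IsMeanOn (SkewStrongRUCB A) m ∧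
    ∀ f, SkewStrongRUCB A f → ∀ s : unitary A, m (fun t => f (t * s)) = m f

end Paper

/-! ### Conditional expectations, injectivity (hyperfiniteness), GNS representations -/

namespace Paper

universe u

variable {H : Type*} [NormedAddCommGroup H] [InnerProductSpace ℂ H] [CompleteSpace H]

/-- A conditional expectation from `B(H)` onto a subset `M ⊆ B(H)`: a unital positive
idempotent `M`-bimodule map with range `M`. -/
structure IsConditionalExpectation (M : Set (H →L[ℂ] H)) (Φ : (H →L[ℂ] H) → (H →L[ℂ] H)) :
    Prop where
  isLinear : IsLinearMap ℂ Φ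
  unital : Φ 1 = 1
  positive : ∀ x : H →L[ℂ] H, x.IsPositive → (Φ x).IsPositive
  range_eq : Set.range Φ = M
  fixes : ∀ x ∈ M, Φ x = x
  bimodule : ∀ m₁ ∈ M, ∀ m₂ ∈ M, ∀ x, Φ (m₁ * x * m₂) = m₁ * Φ x * m₂

/-- A von Neumann algebra (given as a subset of `B(H)`) is injective (equivalently,
hyperfinite, by Connes' theorem) if there is a conditional expectation of `B(H)` onto it. -/
def IsInjectiveVN (M : Set (H →L[ℂ] H)) : Prop :=
  ∃ Φ, IsConditionalExpectation M Φ

/-- `(π, ξ)` is a GNS representation of the state `τ` of `A`: a unital *-representation with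
unit cyclic vector `ξ` whose vector state is `τ`. -/
def IsGNSRep {A : Type u} [CStarAlgebra A] (τ : A → ℂ)
    (π : A →⋆ₐ[ℂ] (H →L[ℂ] H)) (ξ : H) : Prop :=
  ‖ξ‖ = 1 ∧ Dense (Set.range fun a : A => π a ξ) ∧
    ∀ a : A, τ a = inner (𝕜 := ℂ) ξ (π a ξ)

/-- The von Neumann algebra generated by a representation: the double commutant of its range. -/
def genVN {A : Type u} [CStarAlgebra A] (π : A →⋆ₐ[ℂ] (H →L[ℂ] H)) : Set (H →L[ℂ] H) :=
  Set.centralizer (Set.centralizer (Set.range π))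

/-- The von Neumann algebra `π_τ(A)''` generated by any GNS representation of `τ` is
hyperfinite (injective). -/
def GNSHyperfinite {A : Type u} [CStarAlgebra A] (τ : A → ℂ) : Prop :=
  ∀ (H' : Type u) [NormedAddCommGroup H'] [InnerProductSpace ℂ H'] [CompleteSpace H'],
    ∀ (π : A →⋆ₐ[ℂ] (H' →L[ℂ] H')) (ξ : H'), IsGNSRep τ π ξ →
      IsInjectiveVN (genVN π)

end Paper

/-! ### Finite sequences, column isometries and the column norms -/

namespace Paper

universe u

variable {A : Type*} [CStarAlgebra A]

/-- Finite sequences in `A` are modelled as finitely supported functions `ℕ → A`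
(identifying a sequence with its extension by zeros). -/
def IsFinSeq (a : ℕ → A) : Prop := (Function.support a).Finite

/-- `∑ᵢ aᵢ* aᵢ`. -/
noncomputable def sumStarMul (a : ℕ → A) : A := ∑ᶠ i, star (a i) * a i

/-- `∑ᵢ aᵢ aᵢ*`. -/
noncomputable def sumMulStar (a : ℕ → A) : A := ∑ᶠ i, a i * star (a i)

/-- A column isometry: a finite sequence `a` with `∑ᵢ aᵢ* aᵢ = 1`. -/
def IsColumnIsometry (a : ℕ → A) : Prop := IsFinSeq a ∧ sumStarMul a = 1

/-- The column norm `‖a‖_C = ‖∑ᵢ aᵢ* aᵢ‖^{1/2}`. -/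
noncomputable def cNorm (a : ℕ → A) : ℝ := Real.sqrt ‖sumStarMul a‖

/-- The norm `‖a‖_RC = ‖∑ᵢ aᵢ aᵢ*‖^{1/2} + ‖∑ᵢ aᵢ* aᵢ‖^{1/2}`. -/
noncomputable def rcNorm (a : ℕ → A) : ℝ :=
  Real.sqrt ‖sumMulStar a‖ + Real.sqrt ‖sumStarMul a‖

end Paper

/-! ### Dimension drop algebras, the Jiang–Su algebra, Z-stability -/

namespace Paper

universe u

open scoped Kronecker

/-- The (prime, when `p, q` are coprime) dimension drop algebra
`{f ∈ C([0,1], M_p ⊗ M_q) : f(0) ∈ M_p ⊗ ℂ1, f(1) ∈ ℂ1 ⊗ M_q}`, realized as a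
star subalgebra of the functions `[0,1] → M_p ⊗ M_q`. -/
noncomputable def DimDrop (p q : ℕ) :
    StarSubalgebra ℂ (Set.Icc (0 : ℝ) 1 → Matrix (Fin p × Fin q) (Fin p × Fin q) ℂ) where
  carrier := {f | Continuous f ∧
    (∃ x : Matrix (Fin p) (Fin p) ℂ,
      f ⟨0, le_refl 0, zero_le_one⟩ = x ⊗ₖ (1 : Matrix (Fin q) (Fin q) ℂ)) ∧
    (∃ y : Matrix (Fin q) (Fin q) ℂ,
      f ⟨1, zero_le_one, le_refl 1⟩ = (1 : Matrix (Fin p) (Fin p) ℂ) ⊗ₖ y)}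
  mul_mem' := by
    rintro f g ⟨hfc, ⟨x, hx⟩, ⟨y, hy⟩⟩ ⟨hgc, ⟨x', hx'⟩, ⟨y', hy'⟩⟩
    refine ⟨hfc.matrix_mul hgc, ⟨x * x', ?_⟩, ⟨y * y', ?_⟩⟩
    · show f _ * g _ = _
      rw [hx, hx', ← Matrix.mul_kronecker_mul, one_mul]
    · show f _ * g _ = _
      rw [hy, hy', ← Matrix.mul_kronecker_mul, one_mul]
  add_mem' := by
    rintro f g ⟨hfc, ⟨x, hx⟩, ⟨y, hy⟩⟩ ⟨hgc, ⟨x', hx'⟩, ⟨y', hy'⟩⟩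
    refine ⟨hfc.add hgc, ⟨x + x', ?_⟩, ⟨y + y', ?_⟩⟩
    · show f _ + g _ = _
      rw [hx, hx', Matrix.add_kronecker]
    · show f _ + g _ = _
      rw [hy, hy', Matrix.kronecker_add]
  algebraMap_mem' := by
    intro z
    refine ⟨continuous_const, ⟨z • 1, ?_⟩, ⟨z • 1, ?_⟩⟩
    · rw [Matrix.smul_kronecker, Matrix.one_kronecker_one, Pi.algebraMap_apply,
        Algebra.algebraMap_eq_smul_one]
    · rw [Matrix.kronecker_smul, Matrix.one_kronecker_one, Pi.algebraMap_apply,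
        Algebra.algebraMap_eq_smul_one]
  star_mem' := by
    rintro f ⟨hfc, ⟨x, hx⟩, ⟨y, hy⟩⟩
    have hstar : ∀ {pp qq : ℕ} (u : Matrix (Fin pp) (Fin pp) ℂ) (v : Matrix (Fin qq) (Fin qq) ℂ),
        star (u ⊗ₖ v) = star u ⊗ₖ star v := by
      intro pp qq u v
      ext ik jl
      obtain ⟨i, k⟩ := ik
      obtain ⟨j, l⟩ := jl
      simp [Matrix.star_eq_conjTranspose, Matrix.conjTranspose_apply,
        Matrix.kroneckerMap_apply, mul_comm]
    refine ⟨hfc.matrix_conjTranspose, ⟨star x, ?_⟩, ⟨star y, ?_⟩⟩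
    · show star (f ⟨0, le_refl 0, zero_le_one⟩) = _
      rw [hx, hstar, star_one]
    · show star (f ⟨1, zero_le_one, le_refl 1⟩) = _
      rw [hy, hstar, star_one]

/-- The defining properties of the Jiang–Su algebra `Z`: a simple monotracial C*-algebra that
arises as an inductive limit of prime dimension drop algebras (realized internally as an
increasing sequence of unital C*-subalgebras with dense union, each isomorphic to a prime
dimension drop algebra). -/
def IsJiangSu (Z : Type u) [CStarAlgebra Z] : Prop :=
  IsSimpleCStar Z ∧ (∃! τ : Z → ℂ, IsTracialState τ) ∧
  ∃ S : ℕ → StarSubalgebra ℂ Z,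
    (∀ n, S n ≤ S (n + 1)) ∧
    Dense (⋃ n, (S n : Set Z)) ∧
    ∀ n, ∃ p q : ℕ, 0 < p ∧ 0 < q ∧ Nat.Coprime p q ∧
      Nonempty ((S n) ≃⋆ₐ[ℂ] (DimDrop p q))

/-- `θ` realizes the C*-algebra `D` as the minimal tensor product `Z ⊗min A`:  `θ` is an
injective *-homomorphism with dense range from the algebraic tensor product whose associated
norm is the smallest C*-norm. -/
def IsMinTensorCompletion (Z A D : Type u) [CStarAlgebra Z] [CStarAlgebra A] [CStarAlgebra D]
    (θ : Z ⊗[ℂ] A →ₐ[ℂ] D) : Prop :=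
  (∀ t, θ (star t) = star (θ t)) ∧ DenseRange θ ∧
  IsCStarNorm (fun t => ‖θ t‖) ∧
  ∀ N : Z ⊗[ℂ] A → ℝ, IsCStarNorm N → ∀ t, ‖θ t‖ ≤ N t

/-- `A` is `Z`-stable w.r.t. a Jiang–Su algebra `Z` and a realization `D` of `Z ⊗min A`:
namely `Z ⊗min A ≅ A`. -/
def ZStableVia (A Z D : Type u) [CStarAlgebra A] [CStarAlgebra Z] [CStarAlgebra D] : Prop :=
  IsJiangSu Z ∧ ∃ θ : Z ⊗[ℂ] A →ₐ[ℂ] D,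
    IsMinTensorCompletion Z A D θ ∧ Nonempty (D ≃⋆ₐ[ℂ] A)

/-- `A` is `Z`-stable: `A ≅ Z ⊗min A` for a (the) Jiang–Su algebra `Z`. -/
def IsZStable (A : Type u) [CStarAlgebra A] : Prop :=
  ∃ (Z D : Type u) (iZ : CStarAlgebra Z) (iD : CStarAlgebra D),
    @ZStableVia A Z D _ iZ iD

end Paper

/-! ### Ultrapower embeddings, free semicircular realizations, spectral trace values -/

namespace Paper

universe u

/-- The subset `S` of the C*-algebra `B` admits a unital isometric (hence injective)
*-homomorphic embedding into the norm ultrapower `Z^ω`.  Unfolded: there is a (set-theoretic)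
lift `φ` to bounded sequences in `Z` which, along `ω`, is unital, additive, `ℂ`-homogeneous,
multiplicative, star-preserving and isometric. -/
def EmbedsInUltrapowerOn {B : Type u} (Z : Type u) [CStarAlgebra B] [CStarAlgebra Z]
    (ω : Ultrafilter ℕ) (S : Set B) : Prop :=
  ∃ φ : B → ℕ → Z,
    (∀ x ∈ S, ∃ M : ℝ, ∀ n, ‖φ x n‖ ≤ M) ∧
    Filter.Tendsto (fun n => ‖φ 1 n - 1‖) ω (nhds 0) ∧
    (∀ x ∈ S, ∀ y ∈ S,
      Filter.Tendsto (fun n => ‖φ (x + y) n - (φ x n + φ y n)‖) ω (nhds 0)) ∧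
    (∀ (z : ℂ), ∀ x ∈ S,
      Filter.Tendsto (fun n => ‖φ (z • x) n - z • φ x n‖) ω (nhds 0)) ∧
    (∀ x ∈ S, ∀ y ∈ S,
      Filter.Tendsto (fun n => ‖φ (x * y) n - φ x n * φ y n‖) ω (nhds 0)) ∧
    (∀ x ∈ S, Filter.Tendsto (fun n => ‖φ (star x) n - star (φ x n)‖) ω (nhds 0)) ∧
    (∀ x ∈ S, Filter.Tendsto (fun n => ‖φ x n‖) ω (nhds ‖x‖))

/-- A realization, inside an ambient C*-algebra `D`, of commuting copies of the Cuntz algebra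
`O_∞` (generated by the isometries `l i`) and of `A` (via `ι`).  The elements
`s i = l i + (l i)*` then form a free semicircular family w.r.t. any trace, and
`C* ({s i} ∪ ι(A))` is a copy of (a C*-completion of) `C ⊗ A`, where `C` is the free
semicircular C*-algebra. -/
structure FreeSemicircularRealization (A D : Type u) [CStarAlgebra A] [CStarAlgebra D]
    (l : ℕ → D) (ι : A →⋆ₐ[ℂ] D) : Prop where
  isometry : ∀ i, star (l i) * l i = 1
  orthogonal : ∀ i j, i ≠ j → star (l i) * l j = 0
  commutes : ∀ i (a : A), Commute (l i) (ι a)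
  star_commutes : ∀ i (a : A), Commute (star (l i)) (ι a)

/-- The C*-subalgebra realizing `C ⊗ A` in the situation of
`FreeSemicircularRealization`: the closed star subalgebra generated by the semicircular
elements `s i = l i + (l i)*` together with the copy of `A`. -/
noncomputable def semicircleTensor {A D : Type u} [CStarAlgebra A] [CStarAlgebra D]
    (l : ℕ → D) (ι : A →⋆ₐ[ℂ] D) : StarSubalgebra ℂ D :=
  (StarAlgebra.adjoin ℂ ({x : D | ∃ i, x = l i + star (l i)} ∪ Set.range ι)).topologicalClosure

/-- The element `s(a) = ∑ᵢ sᵢ ⊗ aᵢ` in the realization of `C ⊗ A`. -/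
noncomputable def sElem {A D : Type u} [CStarAlgebra A] [CStarAlgebra D]
    (l : ℕ → D) (ι : A →⋆ₐ[ℂ] D) {n : ℕ} (a : Fin n → A) : D :=
  ∑ i : Fin n, (l i.val + star (l i.val)) * ι (a i)

/-- `|x| = (x* x)^{1/2}`, via the continuous functional calculus. -/
noncomputable def absCStar {D : Type u} [CStarAlgebra D] (x : D) : D :=
  cfc Real.sqrt (star x * x)

/-- The value `τ(1_{[0,δ)}(x))` of the normal extension of a tracial state `τ` on the spectral
projection of a positive element `x` for the (relatively open) interval `[0, δ)`, expressed
without the enveloping von Neumann algebra:  it is the supremum of `τ(f(x))` over all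
continuous functions `0 ≤ f ≤ 1` supported in `(-∞, δ)`. -/
noncomputable def traceOpenSpectralValue {D : Type u} [CStarAlgebra D]
    (τ : D → ℂ) (x : D) (δ : ℝ) : ℝ :=
  sSup {r : ℝ | ∃ f : C(ℝ, ℝ), (∀ t, 0 ≤ f t) ∧ (∀ t, f t ≤ 1) ∧ (∀ t, δ ≤ t → f t = 0) ∧
    r = (τ (cfc (⇑f) x)).re}

/-- The value `τ(1_{{0}}(x))` of the normal extension of a tracial state `τ` on the kernel
projection of a positive element `x`:  it is the infimum of `τ(f(x))` over all continuous
functions `0 ≤ f ≤ 1` with `f(0) = 1`. -/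
noncomputable def traceKernelSpectralValue {D : Type u} [CStarAlgebra D]
    (τ : D → ℂ) (x : D) : ℝ :=
  sInf {r : ℝ | ∃ f : C(ℝ, ℝ), (∀ t, 0 ≤ f t) ∧ (∀ t, f t ≤ 1) ∧ f 0 = 1 ∧
    r = (τ (cfc (⇑f) x)).re}

end Paper

/-! ### Von Neumann algebras: unitary groups, normal traces -/

namespace Paper

universe u

variable {H : Type u} [NormedAddCommGroup H] [InnerProductSpace ℂ H] [CompleteSpace H]

/-- The unitary group `U(R)` of a von Neumann algebra `R ⊆ B(H)`, as a subgroup of the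
unitary group of `B(H)`. -/
noncomputable def vnUnitaryGroup (R : VonNeumannAlgebra H) :
    Subgroup (unitary (H →L[ℂ] H)) where
  carrier := {u | (u : H →L[ℂ] H) ∈ R}
  one_mem' := by
    show ((1 : unitary (H →L[ℂ] H)) : H →L[ℂ] H) ∈ R
    rw [OneMemClass.coe_one]
    exact one_mem R
  mul_mem' := by
    intro a b (ha : (a : H →L[ℂ] H) ∈ R) (hb : (b : H →L[ℂ] H) ∈ R)
    show ((a * b : unitary (H →L[ℂ] H)) : H →L[ℂ] H) ∈ R
    rw [MulMemClass.coe_mul]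
    exact mul_mem ha hb
  inv_mem' := by
    intro a (ha : (a : H →L[ℂ] H) ∈ R)
    show ((a⁻¹ : unitary (H →L[ℂ] H)) : H →L[ℂ] H) ∈ R
    rw [← Unitary.star_eq_inv, Unitary.coe_star]
    exact star_mem ha

/-- `τ` is faithful on `M`. -/
def FaithfulOn (M : Set (H →L[ℂ] H)) (τ : (H →L[ℂ] H) → ℂ) : Prop :=
  ∀ x ∈ M, τ (star x * x) = 0 → x = 0

/-- `τ` is normal on `M`: it is a countable sum of vector states. -/
def NormalOn (M : Set (H →L[ℂ] H)) (τ : (H →L[ℂ] H) → ℂ) : Prop :=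
  ∃ ξ : ℕ → H, Summable (fun n => ‖ξ n‖ ^ 2) ∧
    ∀ x ∈ M, τ x = ∑' n, inner (𝕜 := ℂ) (ξ n) (x (ξ n))

/-- Right uniformly continuous bounded functions on `U(R)` for the weak topology `σ(R, R*)`
(equivalently, the topology induced by all bounded linear functionals on `B(H)`, by the
Hahn–Banach theorem). -/
def VNWeakRUCB (R : VonNeumannAlgebra H) (f : vnUnitaryGroup R → ℂ) : Prop :=
  (∃ M : ℝ, ∀ u, ‖f u‖ ≤ M) ∧
  ∀ ε : ℝ, 0 < ε → ∃ (Φ : Finset ((H →L[ℂ] H) →L[ℂ] ℂ)) (δ : ℝ), 0 < δ ∧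
    ∀ u v : vnUnitaryGroup R,
      (∀ φ ∈ Φ, ‖φ (((↑(u * v⁻¹) : unitary (H →L[ℂ] H)) : H →L[ℂ] H) - 1)‖ < δ) →
      ‖f u - f v‖ < ε

/-- Amenability of `U(R)` in the weak topology. -/
def VNAmenableWeak (R : VonNeumannAlgebra H) : Prop :=
  ∃ m : (vnUnitaryGroup R → ℂ) → ℂ, IsMeanOn (VNWeakRUCB R) m ∧
    ∀ f, VNWeakRUCB R f → ∀ s : vnUnitaryGroup R, m (fun t => f (s * t)) = m f

/-- Skew-amenability of `U(R)` in the weak topology. -/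
def VNSkewAmenableWeak (R : VonNeumannAlgebra H) : Prop :=
  ∃ m : (vnUnitaryGroup R → ℂ) → ℂ, IsMeanOn (VNWeakRUCB R) m ∧
    ∀ f, VNWeakRUCB R f → ∀ s : vnUnitaryGroup R, m (fun t => f (t * s)) = m f

end Paper

namespace Paper

universe u

private lemma exists_half_unitary {A : Type u} [CStarAlgebra A] [Nontrivial A] {h : A}
    (hh : IsSelfAdjoint h) :
    ∃ (u : A) (c : ℂ), star u * u = 1 ∧ u * star u = 1 ∧ h = c • u + c • star u := by
  set r : ℝ := ‖h‖ + 1 with hr_def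
  have hr : 0 < r := by positivity
  have hrC : ((r : ℂ)) ≠ 0 := by exact_mod_cast hr.ne'
  set h' : A := ((r : ℂ))⁻¹ • h with hh'
  have hsa' : IsSelfAdjoint h' := by
    rw [hh']
    refine IsSelfAdjoint.smul ?_ hh
    rw [IsSelfAdjoint, star_inv₀, Complex.star_def, Complex.conj_ofReal]
  have hnorm' : ‖h'‖ ≤ 1 := by
    rw [hh', norm_smul]
    have h1 : ‖((r:ℂ))⁻¹‖ = r⁻¹ := by
      rw [norm_inv, Complex.norm_real, Real.norm_of_nonneg hr.le]
    rw [h1]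
    have h2 : ‖h‖ ≤ r := by rw [hr_def]; linarith
    calc r⁻¹ * ‖h‖ ≤ r⁻¹ * r := by gcongr
    _ = 1 := inv_mul_cancel₀ hr.ne'
  have hspec : ∀ z ∈ spectrum ℂ h', z = (z.re : ℂ) ∧ |z.re| ≤ 1 := by
    intro z hz
    have h1 : z = (z.re : ℂ) := hsa'.mem_spectrum_eq_re hz
    refine ⟨h1, ?_⟩
    have h2 : ‖z‖ ≤ ‖h'‖ := spectrum.norm_le_norm_of_mem hz
    have h3 : ‖z‖ = |z.re| := by rw [h1]; simp [Complex.norm_real]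
    linarith [h3 ▸ h2.trans hnorm']
  set f : ℂ → ℂ := fun z => (z.re : ℂ) + Complex.I * ((Real.sqrt (1 - z.re ^ 2) : ℝ) : ℂ)
    with hf_def
  have hfc : Continuous f := by
    apply Continuous.add
    · exact Complex.continuous_ofReal.comp Complex.continuous_re
    · exact continuous_const.mul (Complex.continuous_ofReal.comp
        (Real.continuous_sqrt.comp (by continuity)))
  have hns : IsStarNormal h' := hsa'.isStarNormal
  set u : A := cfc f h' with hu_def
  have hu : u ∈ unitary A := by
    rw [hu_def, cfc_unitary_iff f h' hns hfc.continuousOn]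
    intro z hz
    obtain ⟨hz1, hz2⟩ := hspec z hz
    set a : ℝ := z.re
    set b : ℝ := Real.sqrt (1 - a ^ 2) with hb_def
    have hb2 : (b : ℝ) ^ 2 = 1 - a ^ 2 := Real.sq_sqrt (by nlinarith [abs_le.mp hz2])
    have hstar : star (f z) = (a : ℂ) - Complex.I * (b : ℂ) := by
      simp [hf_def, Complex.conj_ofReal, Complex.conj_I, sub_eq_add_neg]
      show _ = (z.re : ℂ) + -(Complex.I * ((Real.sqrt (1 - z.re ^ 2) : ℝ) : ℂ))
      simp only [sub_eq_add_neg]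
    have key : star (f z) * f z = (a : ℂ) ^ 2 + (b : ℂ) ^ 2 := by
      rw [hstar, hf_def]
      simp only []
      ring_nf
      rw [Complex.I_sq]
      ring
    rw [key]
    norm_cast
    rw [hb2]
    ring
  have hu1 : star u * u = 1 := Unitary.star_mul_self_of_mem hu
  have hu2 : u * star u = 1 := Unitary.mul_star_self_of_mem hu
  have hsum : u + star u = (2 : ℂ) • h' := by
    rw [hu_def, ← cfc_star f h', ← cfc_add (a := h') f _ hfc.continuousOn
      (hfc.star.continuousOn)]
    have key : cfc (fun z => f z + star (f z)) h' = cfc (fun z : ℂ => (2:ℂ) * z) h' := by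
      apply cfc_congr
      intro z hz
      obtain ⟨hz1, -⟩ := hspec z hz
      have e1 : f z + star (f z) = 2 * (z.re : ℂ) := by
        simp [hf_def, Complex.star_def, Complex.conj_ofReal, Complex.conj_I]
        ring
      show f z + star (f z) = 2 * z
      rw [e1, ← hz1]
    rw [key, cfc_const_mul_id (2:ℂ) h' hns]
  refine ⟨u, (r : ℂ) / 2, hu1, hu2, ?_⟩
  rw [← smul_add, hsum, hh', smul_smul, smul_smul]
  rw [show ((r:ℂ)/2 * 2 * ((r:ℂ))⁻¹) = 1 by field_simp, one_smul]

section Aux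

variable {A : Type u} [CStarAlgebra A]
variable {H : Type u} [NormedAddCommGroup H] [InnerProductSpace ℂ H] [CompleteSpace H]

private lemma isom_star_mul (π : A →⋆ₐ[ℂ] (H →L[ℂ] H)) (s : Isom A) :
    star (π (s : A)) * π (s : A) = 1 := by
  have hs : star (s : A) * (s : A) = 1 := s.2
  rw [← map_star, ← map_mul, hs, map_one]

/-- The test function `s ↦ ⟨ξ, s* x s ξ⟩` on the isometry semigroup. -/
private noncomputable def condF (π : A →⋆ₐ[ℂ] (H →L[ℂ] H)) (ξ : H) (x : H →L[ℂ] H) :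
    (Isom A) → ℂ :=
  fun s => inner (𝕜 := ℂ) ξ ((star (π (s : A)) * x * π (s : A)) ξ)

end Aux

/-- A left-invariant mean on `I(A)` produces a tracial state; more precisely,
in the universal representation `π : A → B(H)` (unital, faithful, and such that every state is
a vector state), for any unit vector `ξ`, `x ↦ m'(s ↦ ⟨s* x s ξ, ξ⟩)` is an `A`-central state
on `B(H)` restricting to a tracial state on `A`. -/
theorem stmt2 (A : Type u) [CStarAlgebra A]
    (H : Type u) [NormedAddCommGroup H] [InnerProductSpace ℂ H] [CompleteSpace H]
    (π : A →⋆ₐ[ℂ] (H →L[ℂ] H))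
    (hπ_inj : Function.Injective π)
    (hπ_univ : ∀ φ : A → ℂ, IsState φ →
      ∃ η : H, ‖η‖ = 1 ∧ ∀ a, φ a = inner (𝕜 := ℂ) η (π a η))
    (m : ((Isom A) → ℂ) → ℂ)
    (hm : IsMeanOn IsUCB m)
    (hm_left : ∀ f : (Isom A) → ℂ, IsUCB f → ∀ s : Isom A, m (fun t => f (s * t)) = m f)
    (ξ : H) (hξ : ‖ξ‖ = 1) :
    (∃ τ : A → ℂ, IsTracialState τ) ∧
    IsState (fun x : H →L[ℂ] H =>
      m (fun s => inner (𝕜 := ℂ) ξ ((star (π (s : A)) * x * π (s : A)) ξ))) ∧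
    (∀ (a : A) (x : H →L[ℂ] H),
      m (fun s => inner (𝕜 := ℂ) ξ ((star (π (s : A)) * (π a * x) * π (s : A)) ξ)) =
      m (fun s => inner (𝕜 := ℂ) ξ ((star (π (s : A)) * (x * π a) * π (s : A)) ξ))) ∧
    IsTracialState (fun a : A =>
      m (fun s => inner (𝕜 := ℂ) ξ ((star (π (s : A)) * π a * π (s : A)) ξ))) := by
  -- `H` is nontrivial since it contains the unit vector `ξ`.
  haveI hH : Nontrivial H := nontrivial_of_ne ξ 0 (by
    intro h0; rw [h0, norm_zero] at hξ; norm_num at hξ)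
  -- `A` is nontrivial
  haveI hA : Nontrivial A := by
    rcases subsingleton_or_nontrivial A with hA | hA
    · exfalso
      have h10 : (1 : A) = 0 := Subsingleton.elim _ _
      have h1 : (1 : H →L[ℂ] H) = 0 := by
        calc (1 : H →L[ℂ] H) = π 1 := (map_one π).symm
        _ = π 0 := by rw [h10]
        _ = 0 := map_zero π
      have hξ0 : ξ = 0 := by
        have := congrArg (fun T : H →L[ℂ] H => T ξ) h1
        simpa using this
      rw [hξ0, norm_zero] at hξ; norm_num at hξ
    · exact hA
  have hnormS : ∀ s : Isom A, ‖π (s : A)‖ = 1 := by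
    intro s
    have hone : ‖(1 : H →L[ℂ] H)‖ = 1 := by
      rw [ContinuousLinearMap.one_def]; exact ContinuousLinearMap.norm_id
    have h1 : ‖π (s:A)‖ * ‖π (s:A)‖ = 1 := by
      rw [← CStarRing.norm_star_mul_self, isom_star_mul π s, hone]
    rcases mul_self_eq_one_iff.mp h1 with h | h
    · exact h
    · nlinarith [norm_nonneg (π (s:A))]
  -- basic bound
  have hbound : ∀ (x : H →L[ℂ] H) (s : Isom A), ‖condF π ξ x s‖ ≤ ‖x‖ := by
    intro x s
    have h1 : ‖star (π (s:A)) * x * π (s:A)‖ ≤ ‖x‖ := by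
      calc ‖star (π (s:A)) * x * π (s:A)‖ ≤ ‖star (π (s:A)) * x‖ * ‖π (s:A)‖ :=
            norm_mul_le _ _
      _ ≤ ‖star (π (s:A))‖ * ‖x‖ * ‖π (s:A)‖ := by
            gcongr; exact norm_mul_le _ _
      _ = ‖x‖ := by rw [norm_star, hnormS s]; ring
    calc ‖condF π ξ x s‖ ≤ ‖ξ‖ * ‖(star (π (s:A)) * x * π (s:A)) ξ‖ :=
          norm_inner_le_norm _ _
    _ ≤ ‖ξ‖ * (‖star (π (s:A)) * x * π (s:A)‖ * ‖ξ‖) := by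
          gcongr; exact ContinuousLinearMap.le_opNorm _ _
    _ ≤ ‖x‖ := by rw [hξ]; simpa using h1
  -- the test functions are uniformly continuous and bounded
  have hucb : ∀ x : H →L[ℂ] H, IsUCB (condF π ξ x) := by
    intro x
    constructor
    · have hlip : LipschitzWith (2 * ‖x‖).toNNReal (condF π ξ x) := by
        apply LipschitzWith.of_dist_le_mul
        intro s t
        have hdist : ‖π (s:A) - π (t:A)‖ ≤ dist s t := by
          rw [← map_sub, Subtype.dist_eq, dist_eq_norm]
          exact NonUnitalStarAlgHom.norm_apply_le π _
        set S := π (s:A) with hS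
        set T := π (t:A) with hT
        have hsplit : star S * x * S - star T * x * T
            = star S * x * (S - T) + (star S - star T) * x * T := by noncomm_ring
        have h2 : ‖star S * x * S - star T * x * T‖ ≤ 2 * ‖x‖ * ‖S - T‖ := by
          rw [hsplit]
          have e1 : ‖star S * x * (S - T)‖ ≤ 1 * ‖x‖ * ‖S - T‖ := by
            calc ‖star S * x * (S - T)‖ ≤ ‖star S * x‖ * ‖S - T‖ := norm_mul_le _ _
            _ ≤ ‖star S‖ * ‖x‖ * ‖S - T‖ := by gcongr; exact norm_mul_le _ _
            _ = 1 * ‖x‖ * ‖S - T‖ := by rw [norm_star, hnormS s]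
          have e2 : ‖(star S - star T) * x * T‖ ≤ ‖S - T‖ * ‖x‖ * 1 := by
            calc ‖(star S - star T) * x * T‖ ≤ ‖(star S - star T) * x‖ * ‖T‖ :=
                  norm_mul_le _ _
            _ ≤ ‖star S - star T‖ * ‖x‖ * ‖T‖ := by gcongr; exact norm_mul_le _ _
            _ = ‖S - T‖ * ‖x‖ * 1 := by rw [← star_sub, norm_star, hnormS t]
          calc ‖star S * x * (S - T) + (star S - star T) * x * T‖
              ≤ ‖star S * x * (S - T)‖ + ‖(star S - star T) * x * T‖ := norm_add_le _ _
          _ ≤ 1 * ‖x‖ * ‖S - T‖ + ‖S - T‖ * ‖x‖ * 1 := add_le_add e1 e2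
          _ = 2 * ‖x‖ * ‖S - T‖ := by ring
        have h3 : dist (condF π ξ x s) (condF π ξ x t) ≤ 2 * ‖x‖ * ‖S - T‖ := by
          rw [dist_eq_norm]
          calc ‖condF π ξ x s - condF π ξ x t‖
              = ‖inner (𝕜 := ℂ) ξ ((star S * x * S) ξ)
                  - inner (𝕜 := ℂ) ξ ((star T * x * T) ξ)‖ := rfl
          _ = ‖inner (𝕜 := ℂ) ξ ((star S * x * S - star T * x * T) ξ)‖ := by
                rw [ContinuousLinearMap.sub_apply, inner_sub_right]
          _ ≤ ‖ξ‖ * ‖(star S * x * S - star T * x * T) ξ‖ := norm_inner_le_norm _ _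
          _ ≤ ‖ξ‖ * (‖star S * x * S - star T * x * T‖ * ‖ξ‖) := by
                gcongr; exact ContinuousLinearMap.le_opNorm _ _
          _ ≤ 2 * ‖x‖ * ‖S - T‖ := by rw [hξ]; simpa using h2
        calc dist (condF π ξ x s) (condF π ξ x t) ≤ 2 * ‖x‖ * ‖S - T‖ := h3
        _ ≤ 2 * ‖x‖ * dist s t := by gcongr
        _ = ((2 * ‖x‖).toNNReal : ℝ) * dist s t := by
              rw [Real.coe_toNNReal _ (by positivity)]
      exact hlip.uniformContinuous
    · exact ⟨‖x‖, hbound x⟩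
  -- additivity, homogeneity, positivity, unitality of the would-be state
  have hFadd : ∀ x y : H →L[ℂ] H, condF π ξ (x + y) = condF π ξ x + condF π ξ y := by
    intro x y; funext s
    show inner (𝕜 := ℂ) ξ ((star (π (s:A)) * (x + y) * π (s:A)) ξ)
        = inner (𝕜 := ℂ) ξ ((star (π (s:A)) * x * π (s:A)) ξ)
          + inner (𝕜 := ℂ) ξ ((star (π (s:A)) * y * π (s:A)) ξ)
    rw [mul_add, add_mul, ContinuousLinearMap.add_apply, inner_add_right]
  have hFsmul : ∀ (c : ℂ) (x : H →L[ℂ] H), condF π ξ (c • x) = c • condF π ξ x := by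
    intro c x; funext s
    show inner (𝕜 := ℂ) ξ ((star (π (s:A)) * (c • x) * π (s:A)) ξ)
        = c • inner (𝕜 := ℂ) ξ ((star (π (s:A)) * x * π (s:A)) ξ)
    rw [mul_smul_comm, smul_mul_assoc, ContinuousLinearMap.smul_apply, inner_smul_right]
    rfl
  have hmadd : ∀ x y : H →L[ℂ] H,
      m (condF π ξ (x + y)) = m (condF π ξ x) + m (condF π ξ y) := by
    intro x y; rw [hFadd]; exact hm.map_add _ _ (hucb x) (hucb y)
  have hmsmul : ∀ (c : ℂ) (x : H →L[ℂ] H),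
      m (condF π ξ (c • x)) = c * m (condF π ξ x) := by
    intro c x; rw [hFsmul]; exact hm.map_smul c _ (hucb x)
  have hmpos : ∀ x : H →L[ℂ] H, 0 ≤ m (condF π ξ (star x * x)) := by
    intro x
    apply hm.nonneg _ (hucb _)
    intro s
    have key : condF π ξ (star x * x) s
        = inner (𝕜 := ℂ) (x (π (s:A) ξ)) (x (π (s:A) ξ)) := by
      show inner (𝕜 := ℂ) ξ ((star (π (s:A)) * (star x * x) * π (s:A)) ξ) = _
      simp only [ContinuousLinearMap.mul_apply]
      rw [ContinuousLinearMap.star_eq_adjoint, ContinuousLinearMap.adjoint_inner_right,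
        ContinuousLinearMap.star_eq_adjoint, ContinuousLinearMap.adjoint_inner_right]
    rw [key, inner_self_eq_norm_sq_to_K]
    norm_cast
    positivity
  have hmone : m (condF π ξ 1) = 1 := by
    have key : condF π ξ 1 = fun _ => (1:ℂ) := by
      funext s
      show inner (𝕜 := ℂ) ξ ((star (π (s:A)) * 1 * π (s:A)) ξ) = 1
      rw [mul_one, isom_star_mul π s, ContinuousLinearMap.one_apply,
        inner_self_eq_norm_sq_to_K, hξ]
      norm_num
    rw [key, hm.unit]
  -- invariance under conjugation by isometries
  have hinv : ∀ (t : Isom A) (x : H →L[ℂ] H),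
      m (condF π ξ (star (π (t:A)) * x * π (t:A))) = m (condF π ξ x) := by
    intro t x
    have h1 := hm_left (condF π ξ x) (hucb x) t
    have h2 : (fun s : Isom A => condF π ξ x (t * s))
        = condF π ξ (star (π (t:A)) * x * π (t:A)) := by
      funext s
      show inner (𝕜 := ℂ) ξ ((star (π (((t * s : Isom A)) : A)) * x
            * π (((t * s : Isom A)) : A)) ξ)
          = inner (𝕜 := ℂ) ξ ((star (π (s:A)) * (star (π (t:A)) * x * π (t:A))
            * π (s:A)) ξ)
      have e : star (π (((t * s : Isom A)) : A)) * x * π (((t * s : Isom A)) : A)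
          = star (π (s:A)) * (star (π (t:A)) * x * π (t:A)) * π (s:A) := by
        rw [Submonoid.coe_mul, map_mul, star_mul]
        noncomm_ring
      rw [e]
    rw [← h2, h1]
  have hP_isom : ∀ (v : A), star v * v = 1 → ∀ x : H →L[ℂ] H,
      m (condF π ξ (π v * x)) = m (condF π ξ (x * π v)) := by
    intro v hv x
    have h1 := hinv ⟨v, hv⟩ (π v * x)
    have h2 : star (π v) * (π v * x) * π v = x * π v := by
      rw [show star (π v) * (π v * x) * π v = (star (π v) * π v) * (x * π v) by noncomm_ring,
        ← map_star, ← map_mul, hv, map_one, one_mul]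
    rw [show ((⟨v, hv⟩ : Isom A) : A) = v from rfl] at h1
    rw [h2] at h1
    exact h1.symm
  -- centrality for selfadjoint elements via half-unitaries
  have hP_sa : ∀ h : A, IsSelfAdjoint h → ∀ x : H →L[ℂ] H,
      m (condF π ξ (π h * x)) = m (condF π ξ (x * π h)) := by
    intro h hsa x
    obtain ⟨u, c, hu1, hu2, hdecomp⟩ := exists_half_unitary hsa
    have hu' : star (star u) * star u = 1 := by rw [star_star]; exact hu2
    have e1 := hP_isom u hu1 x
    have e2 := hP_isom (star u) hu' x
    have hπh : π h = c • π u + c • π (star u) := by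
      rw [hdecomp, map_add, map_smul, map_smul]
    have key1 : π h * x = c • (π u * x) + c • (π (star u) * x) := by
      rw [hπh, add_mul, smul_mul_assoc, smul_mul_assoc]
    have key2 : x * π h = c • (x * π u) + c • (x * π (star u)) := by
      rw [hπh, mul_add, mul_smul_comm, mul_smul_comm]
    rw [key1, key2, hmadd, hmadd, hmsmul, hmsmul, hmsmul, hmsmul, e1, e2]
  -- centrality for all elements
  have hP : ∀ (a : A) (x : H →L[ℂ] H),
      m (condF π ξ (π a * x)) = m (condF π ξ (x * π a)) := by
    intro a x
    set h1 : A := (1/2 : ℂ) • (a + star a) with hh1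
    set k1 : A := (Complex.I/2) • (star a - a) with hk1
    have hsa1 : IsSelfAdjoint h1 := by
      rw [hh1, IsSelfAdjoint, star_smul, star_add, star_star]
      congr 1
      · simp
      · exact add_comm _ _
    have hsak : IsSelfAdjoint k1 := by
      rw [hk1, IsSelfAdjoint, star_smul, star_sub, star_star]
      rw [show star (Complex.I/2) = -(Complex.I/2) by simp [Complex.conj_I]; ring]
      rw [neg_smul, ← smul_neg, neg_sub]
    have hdec : a = h1 + Complex.I • k1 := by
      rw [hh1, hk1]
      match_scalars <;>
        first
        | linear_combination ((1:ℂ)/2) * Complex.I_mul_I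
        | linear_combination (-(1:ℂ)/2) * Complex.I_mul_I
    have hπa : π a = π h1 + Complex.I • π k1 := by
      rw [hdec, map_add, map_smul, map_smul]
    have key1 : π a * x = (π h1 * x) + Complex.I • (π k1 * x) := by
      rw [hπa, add_mul, smul_mul_assoc]
    have key2 : x * π a = (x * π h1) + Complex.I • (x * π k1) := by
      rw [hπa, mul_add, mul_smul_comm]
    rw [key1, key2, hmadd, hmadd, hmsmul, hmsmul, hP_sa h1 hsa1 x, hP_sa k1 hsak x]
  -- assemble everything
  have hstate : IsState (fun x : H →L[ℂ] H => m (condF π ξ x)) :=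
    ⟨⟨hmadd, hmsmul⟩, hmpos, hmone⟩
  have htrace : IsTracialState (fun a : A => m (condF π ξ (π a))) := by
    refine ⟨⟨⟨?_, ?_⟩, ?_, ?_⟩, ?_⟩
    · intro a b; rw [map_add]; exact hmadd _ _
    · intro c a; rw [map_smul]; exact hmsmul _ _
    · intro a; rw [map_mul, map_star]; exact hmpos _
    · rw [map_one]; exact hmone
    · intro a b; rw [map_mul, map_mul]; exact hP a (π b)
  exact ⟨⟨_, htrace⟩, hstate, hP, htrace⟩




end Paper
end

section
/- Let S and T be isometries on a complex Hilbert space H, let ξ ∈ H be a vector with T*ξ = 0, and let P be the orthogonal projection onto the kernel of S + T*. Then Pξ = 0. -/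
/-!
Common definitions for formalizing the paper
"Amenability properties of unitary groups of C*-algebras".
-/

open scoped ComplexOrder TensorProduct Kronecker
open Filter

namespace Paper

universe u

/-- If `S, T` are isometries, `T* ξ = 0`, and `P` is the orthogonal
projection onto `ker (S + T*)`, then `P ξ = 0`. -/
theorem stmt16 (H : Type u) [NormedAddCommGroup H] [InnerProductSpace ℂ H] [CompleteSpace H]
    (S T : H →L[ℂ] H) (hS : star S * S = 1) (hT : star T * T = 1)
    (ξ : H) (hξ : star T ξ = 0)
    (P : H →L[ℂ] H) (hP_star : star P = P) (hP_idem : P * P = P)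
    (hP_range : LinearMap.range (P : H →ₗ[ℂ] H) = LinearMap.ker ((S + star T : H →L[ℂ] H) : H →ₗ[ℂ] H)) :
    P ξ = 0 := by
  have key : ∀ (V : H →L[ℂ] H), star V * V = 1 → ∀ a b : H,
      inner (𝕜 := ℂ) (V a) (V b) = inner (𝕜 := ℂ) a b := by
    intro V hV a b
    have happ : (ContinuousLinearMap.adjoint V) (V b) = b := by
      have := congrArg (fun (W : H →L[ℂ] H) => W b) hV
      simpa [ContinuousLinearMap.mul_apply, ContinuousLinearMap.star_eq_adjoint] using this
    calc inner (𝕜 := ℂ) (V a) (V b)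
        = inner (𝕜 := ℂ) a ((ContinuousLinearMap.adjoint V) (V b)) :=
          (ContinuousLinearMap.adjoint_inner_right V a (V b)).symm
      _ = inner (𝕜 := ℂ) a b := by rw [happ]
  set η := P ξ with hηdef
  have hmem : η ∈ LinearMap.ker ((S + star T : H →L[ℂ] H) : H →ₗ[ℂ] H) := by
    rw [← hP_range]; exact ⟨ξ, rfl⟩
  have hker : S η + star T η = 0 := by
    simpa [ContinuousLinearMap.add_apply] using LinearMap.mem_ker.mp hmem
  have hSη : S η = -(star T η) := eq_neg_of_add_eq_zero_left hker
  have hTadj : (star T : H →L[ℂ] H) = ContinuousLinearMap.adjoint T :=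
    ContinuousLinearMap.star_eq_adjoint T
  set c : ℂ := inner (𝕜 := ℂ) (star T η) (star T η) with hc
  have h0 : inner (𝕜 := ℂ) η η = c := by
    rw [← key S hS η η, hSη, inner_neg_neg, hc]
  have h1 : inner (𝕜 := ℂ) η (T (star T η)) = c := by
    rw [hc, hTadj]
    exact (ContinuousLinearMap.adjoint_inner_left T (ContinuousLinearMap.adjoint T η) η).symm
  have h2 : inner (𝕜 := ℂ) (T (star T η)) η = c := by
    rw [hc, hTadj]
    exact (ContinuousLinearMap.adjoint_inner_right T (ContinuousLinearMap.adjoint T η) η).symm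
  have h3 : inner (𝕜 := ℂ) (T (star T η)) (T (star T η)) = c := by
    rw [key T hT, hc]
  have hfix : T (star T η) = η := by
    have hz : inner (𝕜 := ℂ) (η - T (star T η)) (η - T (star T η)) = 0 := by
      rw [inner_sub_sub_self, h0, h1, h2, h3]; ring
    exact (sub_eq_zero.mp (inner_self_eq_zero.mp hz)).symm
  have hξη : inner (𝕜 := ℂ) ξ η = 0 := by
    rw [← hfix, hTadj,
      ← ContinuousLinearMap.adjoint_inner_left T (ContinuousLinearMap.adjoint T η) ξ,
      ← hTadj, hξ, inner_zero_left]
  have hfin : inner (𝕜 := ℂ) η η = 0 := by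
    have hPP : P η = η := by
      rw [hηdef]
      have := congrArg (fun (W : H →L[ℂ] H) => W ξ) hP_idem
      simpa [ContinuousLinearMap.mul_apply] using this
    have hadjP : ContinuousLinearMap.adjoint P = P := by
      rw [← ContinuousLinearMap.star_eq_adjoint, hP_star]
    calc inner (𝕜 := ℂ) η η = inner (𝕜 := ℂ) (P ξ) η := by rw [← hηdef]
      _ = inner (𝕜 := ℂ) ξ (ContinuousLinearMap.adjoint P η) := by
          rw [hadjP, ← ContinuousLinearMap.adjoint_inner_right P ξ η, hadjP]
      _ = 0 := by rw [hadjP, hPP, hξη]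
  exact inner_self_eq_zero.mp hfin

end Paper
end

section
/- Let S and T be proper (i.e., non-surjective) isometries on a complex Hilbert space H. Then −1 is an approximate eigenvalue of TS, and consequently S + T* is not invertible in B(H). -/
/-!
Common definitions for formalizing the paper
"Amenability properties of unitary groups of C*-algebras".
-/

open scoped ComplexOrder TensorProduct Kronecker
open Filter

namespace Paper

universe u

/-- For proper isometries `S, T`, `-1` is an approximate eigenvalue of
`T S`, and consequently `S + T*` is not invertible in `B(H)`. -/
theorem stmt17 (H : Type u) [NormedAddCommGroup H] [InnerProductSpace ℂ H] [CompleteSpace H]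
    (S T : H →L[ℂ] H) (hS : star S * S = 1) (hT : star T * T = 1)
    (hSproper : ¬ Function.Surjective (⇑S)) (hTproper : ¬ Function.Surjective (⇑T)) :
    (∃ η : ℕ → H, (∀ n, ‖η n‖ = 1) ∧
      Filter.Tendsto (fun n => ‖(T * S) (η n) - (-1 : ℂ) • η n‖) Filter.atTop (nhds 0)) ∧
    ¬ IsUnit (S + star T) := by
  classical
  -- the isometry `V = T * S`
  set V : H →L[ℂ] H := T * S with hVdef
  have hV : star V * V = 1 := by
    have : star V * V = star S * (star T * T * S) := by
      rw [hVdef, star_mul, mul_assoc, mul_assoc]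
    rw [this, hT, one_mul, hS]
  have hinner : ∀ x y : H, inner (𝕜 := ℂ) (V x) (V y) = inner (𝕜 := ℂ) x y := by
    intro x y
    have h0 : inner (𝕜 := ℂ) x ((star V * V) y) = inner (𝕜 := ℂ) x y := by
      rw [hV]; simp
    rw [ContinuousLinearMap.mul_apply, ContinuousLinearMap.star_eq_adjoint,
      ContinuousLinearMap.adjoint_inner_right] at h0
    exact h0
  have hnorm : ∀ x : H, ‖V x‖ = ‖x‖ := by
    intro x
    have h2 := hinner x x
    rw [inner_self_eq_norm_sq_to_K, inner_self_eq_norm_sq_to_K] at h2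
    have h3 : ‖V x‖ ^ 2 = ‖x‖ ^ 2 := by exact_mod_cast h2
    rw [← Real.sqrt_sq (norm_nonneg (V x)), h3, Real.sqrt_sq (norm_nonneg x)]
  have hisom : Isometry (⇑V) := AddMonoidHomClass.isometry_of_norm V hnorm
  -- `V` is not surjective
  have hVsurj : ¬ Function.Surjective (⇑V) := by
    intro h
    apply hTproper
    intro y
    obtain ⟨x, hx⟩ := h y
    exact ⟨S x, hx⟩
  -- a unit vector orthogonal to the range of `V`
  set K : Submodule ℂ H := LinearMap.range (V : H →ₗ[ℂ] H) with hKdef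
  have hKcoe : (K : Set H) = Set.range ⇑V := by
    ext x; simp [hKdef, LinearMap.mem_range, Set.mem_range]
  have hKclosed : IsClosed (K : Set H) := by
    rw [hKcoe]; exact hisom.isClosedEmbedding.isClosed_range
  have hKne : K ≠ ⊤ := by
    intro h
    apply hVsurj
    intro y
    have : y ∈ K := h ▸ Submodule.mem_top
    obtain ⟨x, hx⟩ := this
    exact ⟨x, hx⟩
  have hKorth : Kᗮ ≠ ⊥ := by
    intro h
    apply hKne
    have := Submodule.topologicalClosure_eq_top_iff.mpr h
    rwa [hKclosed.submodule_topologicalClosure_eq] at this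
  obtain ⟨ξ0, hξ0K, hξ0ne⟩ := (Submodule.ne_bot_iff _).mp hKorth
  set ξ : H := ((‖ξ0‖ : ℂ))⁻¹ • ξ0 with hξdef
  have hξnorm : ‖ξ‖ = 1 := by
    rw [hξdef, norm_smul]
    simp [norm_ne_zero_iff.mpr hξ0ne, hξ0ne]
  have hξK : ξ ∈ Kᗮ := Submodule.smul_mem _ _ hξ0K
  have hξorthV : ∀ y : H, inner (𝕜 := ℂ) ξ (V y) = 0 := by
    intro y
    exact (Submodule.mem_orthogonal' K ξ).mp hξK (V y) ⟨y, rfl⟩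
  -- the orthonormal family `e k = V^k ξ`
  set e : ℕ → H := fun k => (V ^ k) ξ with hedef
  have hpow_succ : ∀ (k : ℕ) (x : H), (V ^ (k + 1)) x = V ((V ^ k) x) := by
    intro k x
    rw [pow_succ']; rfl
  have hpow_inner : ∀ (k : ℕ) (x y : H),
      inner (𝕜 := ℂ) ((V ^ k) x) ((V ^ k) y) = inner (𝕜 := ℂ) x y := by
    intro k
    induction k with
    | zero => intro x y; simp
    | succ m ih => intro x y; rw [hpow_succ, hpow_succ, hinner, ih]
  have hxi_orth : ∀ m : ℕ, inner (𝕜 := ℂ) ξ ((V ^ (m + 1)) ξ) = 0 := by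
    intro m
    rw [hpow_succ]
    exact hξorthV _
  have haux : ∀ i j : ℕ, i ≤ j →
      inner (𝕜 := ℂ) (e i) (e j) = if i = j then (1 : ℂ) else 0 := by
    intro i j hij
    obtain ⟨d, rfl⟩ := Nat.exists_eq_add_of_le hij
    have hsplit : (V ^ (i + d)) ξ = (V ^ i) ((V ^ d) ξ) := by
      rw [pow_add]; rfl
    rw [hedef]
    simp only []
    rw [hsplit, hpow_inner]
    rcases Nat.eq_zero_or_pos d with hd | hd
    · subst hd
      simp [inner_self_eq_norm_sq_to_K, hξnorm]
    · obtain ⟨d', rfl⟩ := Nat.exists_eq_add_of_lt hd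
      rw [if_neg (by omega)]
      simpa using hxi_orth d'
  have horth : Orthonormal ℂ e := by
    rw [orthonormal_iff_ite]
    intro i j
    rcases le_total i j with hij | hji
    · exact haux i j hij
    · have h := haux j i hji
      calc inner (𝕜 := ℂ) (e i) (e j)
          = (starRingEnd ℂ) (inner (𝕜 := ℂ) (e j) (e i)) := (inner_conj_symm _ _).symm
        _ = (starRingEnd ℂ) (if j = i then (1 : ℂ) else 0) := by rw [h]
        _ = if i = j then (1 : ℂ) else 0 := by
            by_cases hc : i = j
            · simp [hc]
            · rw [if_neg (fun hcc => hc hcc.symm), if_neg hc, map_zero]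
  have henorm : ∀ k, ‖e k‖ = 1 := fun k => horth.1 k
  -- the approximate eigenvectors
  set w : ℕ → H := fun n => ∑ k ∈ Finset.range (n + 1), ((-1 : ℂ) ^ k) • e k with hwdef
  have hwinner : ∀ n, inner (𝕜 := ℂ) (w n) (w n) = ((n : ℂ) + 1) := by
    intro n
    rw [hwdef]
    simp only []
    rw [horth.inner_sum]
    have hterm : ∀ k : ℕ, (starRingEnd ℂ) ((-1 : ℂ) ^ k) * (-1 : ℂ) ^ k = 1 := by
      intro k
      rw [map_pow, map_neg, map_one, ← mul_pow]
      norm_num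
    rw [Finset.sum_congr rfl (fun k _ => hterm k)]
    simp [Finset.sum_const]
  have hwnorm : ∀ n, ‖w n‖ = Real.sqrt ((n : ℝ) + 1) := by
    intro n
    have h2 := hwinner n
    rw [inner_self_eq_norm_sq_to_K] at h2
    have h3 : ‖w n‖ ^ 2 = (n : ℝ) + 1 := by
      have h4 : (((‖w n‖ ^ 2 : ℝ)) : ℂ) = (((n : ℝ) + 1 : ℝ) : ℂ) := by push_cast; exact h2
      exact_mod_cast h4
    rw [← Real.sqrt_sq (norm_nonneg (w n)), h3]
  have hsqrt_pos : ∀ n : ℕ, 0 < Real.sqrt ((n : ℝ) + 1) := by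
    intro n
    apply Real.sqrt_pos.mpr
    positivity
  set η : ℕ → H := fun n => (((Real.sqrt ((n : ℝ) + 1))⁻¹ : ℝ) : ℂ) • w n with hηdef
  have hηnorm : ∀ n, ‖η n‖ = 1 := by
    intro n
    rw [hηdef]
    simp only []
    rw [norm_smul, hwnorm, Complex.norm_real, Real.norm_eq_abs,
      abs_of_pos (inv_pos.mpr (hsqrt_pos n)), inv_mul_cancel₀ (hsqrt_pos n).ne']
  -- the key telescoping identity
  have hVw : ∀ n, V (w n) + w n = e 0 - ((-1 : ℂ) ^ (n + 1)) • e (n + 1) := by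
    intro n
    have hVF : ∀ k : ℕ, V (((-1 : ℂ) ^ k) • e k) = -(((-1 : ℂ) ^ (k + 1)) • e (k + 1)) := by
      intro k
      have he : V (e k) = e (k + 1) := (hpow_succ k ξ).symm
      rw [map_smul, he, pow_succ, mul_neg_one, neg_smul, neg_neg]
    have hsum : V (w n) + w n
        = -∑ k ∈ Finset.range (n + 1),
            (((-1 : ℂ) ^ (k + 1)) • e (k + 1) - ((-1 : ℂ) ^ k) • e k) := by
      rw [hwdef]
      simp only []
      rw [map_sum, ← Finset.sum_add_distrib, ← Finset.sum_neg_distrib]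
      refine Finset.sum_congr rfl fun k _ => ?_
      rw [hVF k]
      abel
    rw [hsum, Finset.sum_range_sub (fun k => ((-1 : ℂ) ^ k) • e k)]
    rw [neg_sub, pow_zero, one_smul]
  -- the approximate eigenvalue bounds
  have hkey : ∀ n, ‖(T * S) (η n) - (-1 : ℂ) • η n‖
      ≤ (Real.sqrt ((n : ℝ) + 1))⁻¹ * 2 := by
    intro n
    have h1 : (T * S) (η n) - (-1 : ℂ) • η n = V (η n) + η n := by
      rw [neg_one_smul, sub_neg_eq_add, hVdef]
    rw [h1, hηdef]
    simp only []
    rw [map_smul, ← smul_add, hVw n, norm_smul, Complex.norm_real, Real.norm_eq_abs,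
      abs_of_pos (inv_pos.mpr (hsqrt_pos n))]
    have h3 : ‖e 0 - ((-1 : ℂ) ^ (n + 1)) • e (n + 1)‖ ≤ 2 := by
      have := norm_sub_le (e 0) (((-1 : ℂ) ^ (n + 1)) • e (n + 1))
      have h4 : ‖((-1 : ℂ) ^ (n + 1)) • e (n + 1)‖ = 1 := by
        rw [norm_smul, henorm]
        simp
      rw [henorm, h4] at this
      linarith
    exact mul_le_mul_of_nonneg_left h3 (inv_pos.mpr (hsqrt_pos n)).le
  have hbound_tendsto :
      Filter.Tendsto (fun n : ℕ => (Real.sqrt ((n : ℝ) + 1))⁻¹ * 2)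
        Filter.atTop (nhds 0) := by
    have h1 : Filter.Tendsto (fun n : ℕ => ((n : ℝ) + 1)⁻¹) Filter.atTop (nhds 0) := by
      simpa [one_div] using tendsto_one_div_add_atTop_nhds_zero_nat (𝕜 := ℝ)
    have h2 : Filter.Tendsto (fun n : ℕ => Real.sqrt (((n : ℝ) + 1)⁻¹))
        Filter.atTop (nhds 0) := by
      have := (Real.continuous_sqrt.tendsto 0).comp h1
      rw [Real.sqrt_zero] at this
      exact this
    have h3 : (fun n : ℕ => (Real.sqrt ((n : ℝ) + 1))⁻¹ * 2)
        = fun n : ℕ => Real.sqrt (((n : ℝ) + 1)⁻¹) * 2 := by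
      funext n
      rw [Real.sqrt_inv]
    rw [h3]
    simpa using h2.mul_const 2
  have htend : Filter.Tendsto (fun n => ‖(T * S) (η n) - (-1 : ℂ) • η n‖)
      Filter.atTop (nhds 0) :=
    squeeze_zero (fun n => norm_nonneg _) hkey hbound_tendsto
  refine ⟨⟨η, hηnorm, htend⟩, ?_⟩
  -- second part: `S + T*` is not invertible
  intro hUnit
  obtain ⟨u, hu⟩ := hUnit
  have key : star T * (T * S + 1) = S + star T := by
    rw [mul_add, mul_one, ← mul_assoc, hT, one_mul]
  have hfeq : ∀ n, (T * S) (η n) - (-1 : ℂ) • η n = (T * S) (η n) + η n := by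
    intro n
    rw [neg_one_smul, sub_neg_eq_add]
  have h1 : ∀ n, (1 : ℝ) ≤ ‖(↑u⁻¹ : H →L[ℂ] H)‖ *
      (‖star T‖ * ‖(T * S) (η n) - (-1 : ℂ) • η n‖) := by
    intro n
    have e1 : (S + star T) (η n) = (star T) ((T * S) (η n) + η n) := by
      have hc := congrArg (fun (A : H →L[ℂ] H) => A (η n)) key
      simp only [ContinuousLinearMap.mul_apply, ContinuousLinearMap.add_apply,
        ContinuousLinearMap.one_apply] at hc
      exact hc.symm
    have e2 : ‖(S + star T) (η n)‖ ≤ ‖star T‖ * ‖(T * S) (η n) - (-1 : ℂ) • η n‖ := by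
      rw [e1, hfeq n]
      exact ContinuousLinearMap.le_opNorm _ _
    calc (1 : ℝ) = ‖η n‖ := (hηnorm n).symm
      _ = ‖((↑u⁻¹ * ↑u : H →L[ℂ] H)) (η n)‖ := by
          rw [u.inv_mul]; simp
      _ = ‖(↑u⁻¹ : H →L[ℂ] H) ((S + star T) (η n))‖ := by
          rw [ContinuousLinearMap.mul_apply, hu]
      _ ≤ ‖(↑u⁻¹ : H →L[ℂ] H)‖ * ‖(S + star T) (η n)‖ :=
          ContinuousLinearMap.le_opNorm _ _
      _ ≤ ‖(↑u⁻¹ : H →L[ℂ] H)‖ *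
          (‖star T‖ * ‖(T * S) (η n) - (-1 : ℂ) • η n‖) :=
          mul_le_mul_of_nonneg_left e2 (norm_nonneg _)
  have h2 : Filter.Tendsto (fun n => ‖(↑u⁻¹ : H →L[ℂ] H)‖ *
      (‖star T‖ * ‖(T * S) (η n) - (-1 : ℂ) • η n‖)) Filter.atTop (nhds 0) := by
    have := (htend.const_mul ‖star T‖).const_mul ‖(↑u⁻¹ : H →L[ℂ] H)‖
    simpa using this
  obtain ⟨n, hn⟩ := (h2.eventually_lt_const one_pos).exists
  exact absurd (h1 n) (not_le.mpr hn)

end Paper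
end

section
/- Let l_1, …, l_n be isometries with mutually orthogonal ranges in a unital C*-algebra B (e.g., the generators of the Cuntz algebra O_∞), let A be a unital C*-algebra, and let a_1, …, a_n ∈ A. Set S := Σ_i l_i ⊗ a_i and T := Σ_i l_i ⊗ a_i* in B ⊗_min A. Then S*S = 1 ⊗ Σ_i a_i*a_i and T*T = 1 ⊗ Σ_i a_i a_i*; consequently ||Σ_i (l_i + l_i*) ⊗ a_i|| = ||S + T*|| ≤ ||Σ_i a_i a_i*||^{1/2} + ||Σ_i a_i*a_i||^{1/2}. -/
/-!
Common definitions for formalizing the paper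
"Amenability properties of unitary groups of C*-algebras".
-/

open scoped ComplexOrder TensorProduct Kronecker
open Filter

namespace Paper

universe u

/-- For isometries `l₁, …, l_n` with mutually orthogonal ranges in `B` and
`a₁, …, a_n ∈ A`, with `S = ∑ lᵢ ⊗ aᵢ` and `T = ∑ lᵢ ⊗ aᵢ*` (realized in any C*-algebra `D`
containing commuting copies of `B` and `A`): `S* S = 1 ⊗ ∑ aᵢ* aᵢ`, `T* T = 1 ⊗ ∑ aᵢ aᵢ*`,
and `‖∑ (lᵢ + lᵢ*) ⊗ aᵢ‖ = ‖S + T*‖ ≤ ‖∑ aᵢ aᵢ*‖^{1/2} + ‖∑ aᵢ* aᵢ‖^{1/2}`. -/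
theorem stmt18 (B A D : Type u) [CStarAlgebra B] [CStarAlgebra A] [CStarAlgebra D]
    (ιB : B →⋆ₐ[ℂ] D) (ιA : A →⋆ₐ[ℂ] D)
    (n : ℕ) (l : Fin n → B)
    (hiso : ∀ i, star (l i) * l i = 1)
    (horth : ∀ i j, i ≠ j → star (l i) * l j = 0)
    (hcomm : ∀ (i : Fin n) (x : A), Commute (ιB (l i)) (ιA x))
    (hcommStar : ∀ (i : Fin n) (x : A), Commute (star (ιB (l i))) (ιA x))
    (a : Fin n → A) :
    star (∑ i, ιB (l i) * ιA (a i)) * (∑ i, ιB (l i) * ιA (a i)) =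
      ιA (∑ i, star (a i) * a i) ∧
    star (∑ i, ιB (l i) * ιA (star (a i))) * (∑ i, ιB (l i) * ιA (star (a i))) =
      ιA (∑ i, a i * star (a i)) ∧
    (∑ i, (ιB (l i) + star (ιB (l i))) * ιA (a i)) =
      (∑ i, ιB (l i) * ιA (a i)) + star (∑ i, ιB (l i) * ιA (star (a i))) ∧
    ‖∑ i, (ιB (l i) + star (ιB (l i))) * ιA (a i)‖ ≤
      Real.sqrt ‖∑ i, a i * star (a i)‖ + Real.sqrt ‖∑ i, star (a i) * a i‖ := by
  have key : ∀ b : Fin n → A,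
      star (∑ i, ιB (l i) * ιA (b i)) * (∑ i, ιB (l i) * ιA (b i)) =
        ιA (∑ i, star (b i) * b i) := by
    intro b
    rw [star_sum, Finset.sum_mul_sum, map_sum]
    refine Finset.sum_congr rfl fun i _ => ?_
    rw [Finset.sum_eq_single i]
    · rw [star_mul, ← map_star, ← map_star, mul_assoc, ← mul_assoc (ιB (star (l i))),
        ← map_mul, hiso, map_one, one_mul, ← map_mul]
    · intro j _ hj
      rw [star_mul, ← map_star (f := ιB), mul_assoc, ← mul_assoc (ιB (star (l i))),
        ← map_mul, horth i j (Ne.symm hj), map_zero, zero_mul, mul_zero]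
    · simp
  have hS := key a
  have hT := key (fun i => star (a i))
  simp only [star_star] at hT
  have hSum : (∑ i, (ιB (l i) + star (ιB (l i))) * ιA (a i)) =
      (∑ i, ιB (l i) * ιA (a i)) + star (∑ i, ιB (l i) * ιA (star (a i))) := by
    rw [star_sum]
    rw [← Finset.sum_add_distrib]
    refine Finset.sum_congr rfl fun i _ => ?_
    rw [add_mul, star_mul, map_star, star_star, (hcommStar i (a i)).eq]
  refine ⟨hS, hT, hSum, ?_⟩
  rw [hSum]
  have normS : ‖∑ i, ιB (l i) * ιA (a i)‖ ≤ Real.sqrt ‖∑ i, star (a i) * a i‖ := by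
    have h1 : ‖∑ i, ιB (l i) * ιA (a i)‖ ^ 2 = ‖ιA (∑ i, star (a i) * a i)‖ := by
      rw [hS.symm, CStarRing.norm_star_mul_self, sq]
    have h2 : ‖ιA (∑ i, star (a i) * a i)‖ ≤ ‖∑ i, star (a i) * a i‖ :=
      NonUnitalStarAlgHom.norm_apply_le ιA _
    calc ‖∑ i, ιB (l i) * ιA (a i)‖
        = Real.sqrt (‖∑ i, ιB (l i) * ιA (a i)‖ ^ 2) := (Real.sqrt_sq (norm_nonneg _)).symm
      _ ≤ Real.sqrt ‖∑ i, star (a i) * a i‖ := Real.sqrt_le_sqrt (h1 ▸ h2)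
  have normT : ‖∑ i, ιB (l i) * ιA (star (a i))‖ ≤ Real.sqrt ‖∑ i, a i * star (a i)‖ := by
    have h1 : ‖∑ i, ιB (l i) * ιA (star (a i))‖ ^ 2 = ‖ιA (∑ i, a i * star (a i))‖ := by
      rw [hT.symm, CStarRing.norm_star_mul_self, sq]
    have h2 : ‖ιA (∑ i, a i * star (a i))‖ ≤ ‖∑ i, a i * star (a i)‖ :=
      NonUnitalStarAlgHom.norm_apply_le ιA _
    calc ‖∑ i, ιB (l i) * ιA (star (a i))‖
        = Real.sqrt (‖∑ i, ιB (l i) * ιA (star (a i))‖ ^ 2) := (Real.sqrt_sq (norm_nonneg _)).symm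
      _ ≤ Real.sqrt ‖∑ i, a i * star (a i)‖ := Real.sqrt_le_sqrt (h1 ▸ h2)
  calc ‖(∑ i, ιB (l i) * ιA (a i)) + star (∑ i, ιB (l i) * ιA (star (a i)))‖
      ≤ ‖∑ i, ιB (l i) * ιA (a i)‖ + ‖star (∑ i, ιB (l i) * ιA (star (a i)))‖ := norm_add_le _ _
    _ = ‖∑ i, ιB (l i) * ιA (a i)‖ + ‖∑ i, ιB (l i) * ιA (star (a i))‖ := by rw [norm_star]
    _ ≤ Real.sqrt ‖∑ i, star (a i) * a i‖ + Real.sqrt ‖∑ i, a i * star (a i)‖ :=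
        add_le_add normS normT
    _ = _ := add_comm _ _

end Paper
end
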